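/- Suppose the labeled space (E,L,𝔅̄) satisfies: for every finite subset {A_1,…,A_N} of 𝔅̄ and every K ≥ 1 there exists m_0 ≥ 1 such that A_{i_1}E^{≤K}A_{i_2}⋯E^{≤K}A_{i_n} = ∅ for all n > m_0 and all choices i_j ∈ {1,…,N}. Then for every representation {s_a, p_A} of (E,L,𝔅̄) in a C*-algebra, the C*-subalgebra generated by {s_a : a ∈ 𝒜} ∪ {p_A : A ∈ 𝔅̄} is an AF algebra, i.e. for every finite subset F of it and every ε > 0 there is a finite-dimensional C*-subalgebra D with every element of F within distance ε of D. -/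

import Mathlib

/-! # Common framework for labeled graph C*-algebras

Directed graphs, finite paths, labeled spaces `(E, L, 𝔅̄)` where `𝔅̄` is the
smallest accommodating set closed under relative complements (and containing
the sink parts of its members), loops and generalized loops, representations
of labeled spaces in C*-algebras, gauge actions, infinite projections,
AF algebras, and closed two-sided ideals. -/

noncomputable section

/-- A directed graph with vertex set `V` and edge set `E`. -/
structure DirGraph (V : Type*) (E : Type*) where
  src : E → V
  rng : E → V

variable {V E 𝒜 : Type*}

/-- A (finite) path of positive length in a directed graph: a nonempty list of
composable edges. -/
structure GPath (G : DirGraph V E) where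
  edges : List E
  ne : edges ≠ []
  chain : edges.Chain' fun e f => G.rng e = G.src f

namespace GPath

variable {G : DirGraph V E}

/-- The source vertex of a path. -/
def source (p : GPath G) : V := G.src (p.edges.head p.ne)

/-- The range vertex of a path. -/
def range (p : GPath G) : V := G.rng (p.edges.getLast p.ne)

/-- The length of a path. -/
def length (p : GPath G) : ℕ := p.edges.length

/-- The label word of a path under a labeling `L`. -/
def label (L : E → 𝒜) (p : GPath G) : List 𝒜 := p.edges.map L

end GPath

/-- The set of sinks of a graph (vertices emitting no edge). -/
def DirGraph.sinks (G : DirGraph V E) : Set V := {v | ∀ e, G.src e ≠ v}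

/-- `w ∈ L*(E)`: `w` is the label of some path of positive length. -/
def IsLabelWord (G : DirGraph V E) (L : E → 𝒜) (w : List 𝒜) : Prop :=
  ∃ p : GPath G, p.label L = w

/-- The range `r(w)` of a labeled path `w`. -/
def rngW (G : DirGraph V E) (L : E → 𝒜) (w : List 𝒜) : Set V :=
  {v | ∃ p : GPath G, p.label L = w ∧ p.range = v}

/-- The relative range `r(A, w)` of a labeled path `w` with respect to `A`. -/
def relRng (G : DirGraph V E) (L : E → 𝒜) (A : Set V) (w : List 𝒜) : Set V :=
  {v | ∃ p : GPath G, p.label L = w ∧ p.source ∈ A ∧ p.range = v}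

/-- `L(A E^n)`: labels of paths of length exactly `n` with source in `A`. -/
def labelsFromLen (G : DirGraph V E) (L : E → 𝒜) (A : Set V) (n : ℕ) : Set (List 𝒜) :=
  {w | ∃ p : GPath G, p.source ∈ A ∧ p.length = n ∧ p.label L = w}

/-- `L(A E^{≤n})`: labels of paths of length between `1` and `n` with source in `A`. -/
def labelsFromLe (G : DirGraph V E) (L : E → 𝒜) (A : Set V) (n : ℕ) : Set (List 𝒜) :=
  {w | ∃ p : GPath G, p.source ∈ A ∧ p.length ≤ n ∧ p.label L = w}

/-- `L(A E^{≥n})`: labels of paths of length at least `n` (and at least `1`)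
with source in `A`. -/
def labelsFromGe (G : DirGraph V E) (L : E → 𝒜) (A : Set V) (n : ℕ) : Set (List 𝒜) :=
  {w | ∃ p : GPath G, p.source ∈ A ∧ n ≤ p.length ∧ p.label L = w}

/-- `L(E^n A)`: labels of paths of length exactly `n` with range in `A`. -/
def labelsToLen (G : DirGraph V E) (L : E → 𝒜) (n : ℕ) (A : Set V) : Set (List 𝒜) :=
  {w | ∃ p : GPath G, p.range ∈ A ∧ p.length = n ∧ p.label L = w}

/-- `L(E^{≤l} v)`: labels of paths of length between `1` and `l` with range `v`. -/
def labelsToLe (G : DirGraph V E) (L : E → 𝒜) (l : ℕ) (v : V) : Set (List 𝒜) :=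
  {w | ∃ p : GPath G, p.range = v ∧ p.length ≤ l ∧ p.label L = w}

/-- `𝔅̄`: the smallest accommodating set for `(E, L)` (containing the ranges
`r(α)` for `α ∈ L*(E)` and closed under relative ranges, finite intersections
and finite unions) that is moreover closed under relative complements and
contains `A_sk = A ∩ sinks` for every `A` belonging to it. -/
inductive Bbar (G : DirGraph V E) (L : E → 𝒜) : Set V → Prop
  | base (w : List 𝒜) (hw : IsLabelWord G L w) : Bbar G L (rngW G L w)
  | rel (A : Set V) (w : List 𝒜) (hA : Bbar G L A) (hw : IsLabelWord G L w) :
      Bbar G L (relRng G L A w)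
  | inter (A B : Set V) (hA : Bbar G L A) (hB : Bbar G L B) : Bbar G L (A ∩ B)
  | union (A B : Set V) (hA : Bbar G L A) (hB : Bbar G L B) : Bbar G L (A ∪ B)
  | diff (A B : Set V) (hA : Bbar G L A) (hB : Bbar G L B) : Bbar G L (A \ B)
  | sk (A : Set V) (hA : Bbar G L A) : Bbar G L (A ∩ G.sinks)

/-- The standing assumptions on a labeled space `(E, L, 𝔅̄)`: weakly
left-resolving, set-finite, receiver set-finite, and no sink is a source. -/
structure StandingAssumptions (G : DirGraph V E) (L : E → 𝒜) : Prop where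
  wlr : ∀ A B : Set V, Bbar G L A → Bbar G L B → ∀ w : List 𝒜, IsLabelWord G L w →
    relRng G L A w ∩ relRng G L B w = relRng G L (A ∩ B) w
  setFinite : ∀ A : Set V, Bbar G L A → ∀ n : ℕ, 1 ≤ n → (labelsFromLen G L A n).Finite
  receiverSetFinite : ∀ A : Set V, Bbar G L A → ∀ n : ℕ, 1 ≤ n → (labelsToLen G L n A).Finite
  sinkNotSource : ∀ v ∈ G.sinks, ∃ e, G.rng e = v

/-- The `n`-fold concatenation `w^n` of a word `w`. -/
def wordPow (w : List 𝒜) (n : ℕ) : List 𝒜 := (List.replicate n w).flatten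

/-- A labeled path is repeatable if all its powers `w^n`, `n ≥ 1`, are again
labeled paths. -/
def Repeatable (G : DirGraph V E) (L : E → 𝒜) (w : List 𝒜) : Prop :=
  ∀ n : ℕ, 1 ≤ n → IsLabelWord G L (wordPow w n)

/-- The generalized vertex `[v]_l`: all non-source vertices receiving exactly
the same labeled paths of length at most `l` as `v` does. -/
def gvtx (G : DirGraph V E) (L : E → 𝒜) (l : ℕ) (v : V) : Set V :=
  {u | (∃ e, G.rng e = u) ∧ labelsToLe G L l u = labelsToLe G L l v}

/-- A generalized loop at `A`: a labeled path `α ∈ L(A E^{≥1} A)`. -/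
def IsGenLoop (G : DirGraph V E) (L : E → 𝒜) (A : Set V) (α : List 𝒜) : Prop :=
  ∃ p : GPath G, p.label L = α ∧ p.source ∈ A ∧ p.range ∈ A

/-- A loop at `A`: a generalized loop `α` at `A` such that `A ⊆ r(A, α)`. -/
def IsLoop (G : DirGraph V E) (L : E → 𝒜) (A : Set V) (α : List 𝒜) : Prop :=
  IsGenLoop G L A α ∧ A ⊆ relRng G L A α

/-- The nonempty initial segments (initial paths) of a word `α`. -/
def initialSegs (α : List 𝒜) : Set (List 𝒜) := {w | w ≠ [] ∧ w <+: α}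

/-- A loop `α` at `A` has an exit if (i) the initial segments of `α` form a
proper subset of `L(A E^{≤|α|})`, or (ii) `r(A, α_{[1,i]})` contains a sink for
some `1 ≤ i ≤ |α|`, or (iii) `A` is a proper subset of `r(A, α)`. -/
def HasExitLoop (G : DirGraph V E) (L : E → 𝒜) (A : Set V) (α : List 𝒜) : Prop :=
  initialSegs α ⊂ labelsFromLe G L A α.length ∨
  (∃ k : ℕ, 1 ≤ k ∧ k ≤ α.length ∧ (relRng G L A (α.take k) ∩ G.sinks).Nonempty) ∨
  A ⊂ relRng G L A α

/-- `A_0 E^{≤K} A_1 ⋯ E^{≤K} A_m ≠ ∅`: existence of `m` consecutively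
composable paths, each of length between `1` and `K`, the `j`-th going from
`As j` to `As (j+1)`. -/
def ChainExists (G : DirGraph V E) (As : ℕ → Set V) (K m : ℕ) : Prop :=
  ∃ xs : Fin m → GPath G,
    (∀ j : Fin m, (xs j).length ≤ K ∧ (xs j).source ∈ As j.val ∧
      (xs j).range ∈ As (j.val + 1)) ∧
    ∀ (j : ℕ) (h : j + 1 < m),
      (xs ⟨j, Nat.lt_of_succ_lt h⟩).range = (xs ⟨j + 1, h⟩).source

/-- Same as `ChainExists` but with all paths of length exactly `K`
(i.e. `A_0 E^K A_1 ⋯ E^K A_m ≠ ∅`). -/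
def ChainExistsExact (G : DirGraph V E) (As : ℕ → Set V) (K m : ℕ) : Prop :=
  ∃ xs : Fin m → GPath G,
    (∀ j : Fin m, (xs j).length = K ∧ (xs j).source ∈ As j.val ∧
      (xs j).range ∈ As (j.val + 1)) ∧
    ∀ (j : ℕ) (h : j + 1 < m),
      (xs ⟨j, Nat.lt_of_succ_lt h⟩).range = (xs ⟨j + 1, h⟩).source

/-- Condition (a): for every finite family `A_1, …, A_N` in `𝔅̄` and every
`K ≥ 1` there is `m₀ ≥ 1` such that
`A_{i_1} E^{≤K} A_{i_2} ⋯ E^{≤K} A_{i_n} = ∅` (`n` sets, `n - 1` path factors)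
for all `n > m₀` and all choices of indices. -/
def CondA (G : DirGraph V E) (L : E → 𝒜) : Prop :=
  ∀ (N : ℕ) (As : Fin N → Set V), (∀ i, Bbar G L (As i)) → ∀ K : ℕ, 1 ≤ K →
    ∃ m0 : ℕ, 1 ≤ m0 ∧ ∀ n : ℕ, m0 < n → ∀ ι : ℕ → Fin N,
      ¬ ChainExists G (fun j => As (ι j)) K (n - 1)

/-- A word is agreeable (for level `l`) if it is of the form `β^k β'` with
`β, β' ∈ L(E^{≤l})` and `β'` a nonempty initial segment of `β`. -/
def AgreeableW (G : DirGraph V E) (L : E → 𝒜) (l : ℕ) (α : List 𝒜) : Prop :=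
  ∃ (k : ℕ) (β β' : List 𝒜), IsLabelWord G L β ∧ IsLabelWord G L β' ∧
    β.length ≤ l ∧ β' ≠ [] ∧ β' <+: β ∧ α = wordPow β k ++ β'

/-- A representation of the labeled space `(E, L, 𝔅̄)` in a (C*-)algebra `B`:
projections `p A`, `A ∈ 𝔅̄`, and partial isometries `s a`, `a ∈ 𝒜`, satisfying
the defining relations of a labeled graph C*-algebra. -/
structure LRep (G : DirGraph V E) (L : E → 𝒜) (B : Type*)
    [NonUnitalRing B] [StarRing B] where
  p : Set V → B
  s : 𝒜 → B
  p_empty : p ∅ = 0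
  p_sa : ∀ A : Set V, Bbar G L A → star (p A) = p A
  p_mul : ∀ A A' : Set V, Bbar G L A → Bbar G L A' → p A * p A' = p (A ∩ A')
  p_union : ∀ A A' : Set V, Bbar G L A → Bbar G L A' →
    p (A ∪ A') = p A + p A' - p (A ∩ A')
  s_pi : ∀ a : 𝒜, s a * star (s a) * s a = s a
  p_s : ∀ (A : Set V) (a : 𝒜), Bbar G L A → p A * s a = s a * p (relRng G L A [a])
  s_s : ∀ a : 𝒜, star (s a) * s a = p (rngW G L [a])
  s_orth : ∀ a b : 𝒜, a ≠ b → star (s a) * s b = 0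
  ck : ∀ A : Set V, Bbar G L A →
    p A = (∑ᶠ a ∈ {a : 𝒜 | ∃ e, G.src e ∈ A ∧ L e = a},
      s a * p (relRng G L A [a]) * star (s a)) + p (A ∩ G.sinks)

/-- `s_α` for a word `α`: the product of the partial isometries of its letters
(junk value `0` on the empty word, which is never used). -/
def sWord {B : Type*} [NonUnitalRing B] (s : 𝒜 → B) : List 𝒜 → B
  | [] => 0
  | [a] => s a
  | a :: b :: w => s a * sWord s (b :: w)

/-- The range of a word in `L^#(E)` (`none` is the empty word, with range all
of `E^0`). -/
def owordRng (G : DirGraph V E) (L : E → 𝒜) : Option (List 𝒜) → Set V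
  | none => Set.univ
  | some w => rngW G L w

/-- The relative range of a word in `L^#(E)` with respect to `A` (`none` is
the empty word, with `r(A, ε) = A`). -/
def relRngE (G : DirGraph V E) (L : E → 𝒜) (A : Set V) : Option (List 𝒜) → Set V
  | none => A
  | some w => relRng G L A w

/-- The element `s_α p_A s_β*` of a representation, where `α`, `β` are words in
`L^#(E)` (`none` being the empty word `ε` with `s_ε` the identity). -/
def LRep.elt {B : Type*} [NonUnitalRing B] [StarRing B] {G : DirGraph V E} {L : E → 𝒜}
    (rep : LRep G L B) : Option (List 𝒜) → Set V → Option (List 𝒜) → B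
  | none, A, none => rep.p A
  | some α, A, none => sWord rep.s α * rep.p A
  | none, A, some β => rep.p A * star (sWord rep.s β)
  | some α, A, some β => sWord rep.s α * rep.p A * star (sWord rep.s β)

/-- A projection `q` is infinite if there is a partial isometry `u` with
`u* u = q`, `u u* ≤ q` and `u u* ≠ q`. -/
def IsInfiniteProjection (B : Type*) [NonUnitalRing B] [StarRing B] [PartialOrder B]
    (q : B) : Prop :=
  star q = q ∧ q * q = q ∧ ∃ u : B, star u * u = q ∧ u * star u ≤ q ∧ u * star u ≠ q

/-- A C*-algebra is AF if every finite subset can be approximated within any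
`ε > 0` from a finite-dimensional *-subalgebra. -/
def IsAFAlgebra (B : Type*) [NonUnitalNormedRing B] [StarRing B] [NormedSpace ℂ B] : Prop :=
  ∀ (F : Finset B) (ε : ℝ), 0 < ε →
    ∃ D : NonUnitalStarSubalgebra ℂ B, FiniteDimensional ℂ D ∧
      ∀ x ∈ F, ∃ y ∈ (D : Set B), ‖x - y‖ < ε

/-- A gauge action for a representation: a strongly continuous action of the
circle group by *-automorphisms fixing the projections and scaling the
generating partial isometries. -/
structure GaugeAction {B : Type*} [NonUnitalCStarAlgebra B]
    (G : DirGraph V E) (L : E → 𝒜) (rep : LRep G L B) where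
  γ : Circle → B ≃⋆ₐ[ℂ] B
  γ_mul : ∀ z w : Circle, γ (z * w) = (γ w).trans (γ z)
  γ_continuous : ∀ x : B, Continuous fun z => γ z x
  γ_s : ∀ (z : Circle) (a : 𝒜), γ z (rep.s a) = (z : ℂ) • rep.s a
  γ_p : ∀ (z : Circle) (A : Set V), Bbar G L A → γ z (rep.p A) = rep.p A

/-- The representation generates `B` as a C*-algebra. -/
def GeneratesAlg {B : Type*} [NonUnitalCStarAlgebra B]
    (G : DirGraph V E) (L : E → 𝒜) (rep : LRep G L B) : Prop :=
  closure (NonUnitalStarAlgebra.adjoin ℂ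
    ({x : B | ∃ a : 𝒜, x = rep.s a} ∪ {x : B | ∃ A : Set V, Bbar G L A ∧ x = rep.p A}) : Set B)
    = Set.univ

/-- A closed two-sided ideal of a C*-algebra (as a set). -/
def IsClosedTwoSidedIdealSet (B : Type*) [NonUnitalNormedRing B] [NormedSpace ℂ B]
    (I : Set B) : Prop :=
  IsClosed I ∧ (0 : B) ∈ I ∧ (∀ x ∈ I, ∀ y ∈ I, x + y ∈ I) ∧
    (∀ (c : ℂ), ∀ x ∈ I, c • x ∈ I) ∧ ∀ x ∈ I, ∀ y : B, x * y ∈ I ∧ y * x ∈ I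

/-- The closed two-sided ideal generated by an element. -/
def closedIdealGen (B : Type*) [NonUnitalNormedRing B] [NormedSpace ℂ B] (q : B) : Set B :=
  ⋂₀ {I : Set B | IsClosedTwoSidedIdealSet B I ∧ q ∈ I}

/-! Finitely many elements are approximated from the *-algebra generated by finitely many
`s_a` (`a ∈ 𝒜₀`) and `p_A` (`A ∈ 𝒞₀`), so it suffices to show that this *-algebra is
finite-dimensional. Condition (a) for the sets `r(a)`, `a ∈ 𝒜₀`, and `K = 1` bounds the length
of labelled paths over `𝒜₀`; hence `s_α = 0` and `r(X, α) = ∅` for long words `α` over `𝒜₀`.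
The elements `s_α p_C s_β^*`, with `α, β` words over `𝒜₀` and `C` in the intersection-closed
family generated by the sets `r(X, w)`, `X ∈ 𝒞₀ ∪ {r(a)}`, then form a finite set that is closed
under adjoints and, up to `0`, under products: `(s_α p_C s_β^*)(s_μ p_D s_ν^*)` vanishes unless
one of `β`, `μ` is a prefix of the other, and is again of this form otherwise, weak
left-resolvingness keeping the family closed under relative ranges. -/

open Set

theorem NonUnitalStarAlgebra.exists_finite_subset_of_subset_adjoin {R A : Type*}
    [CommSemiring R] [StarRing R] [NonUnitalSemiring A] [StarRing A] [Module R A]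
    [IsScalarTower R A A] [SMulCommClass R A A] [StarModule R A] {s Y : Set A}
    (hY : Y.Finite) (hYs : Y ⊆ adjoin R s) : ∃ t ⊆ s, t.Finite ∧ Y ⊆ adjoin R t := by
  have hpair : ∀ x y : A, (∃ t ⊆ s, t.Finite ∧ x ∈ adjoin R t) →
      (∃ t ⊆ s, t.Finite ∧ y ∈ adjoin R t) →
      ∃ t ⊆ s, t.Finite ∧ x ∈ adjoin R t ∧ y ∈ adjoin R t := by
    rintro x y ⟨t, hts, ht, hx⟩ ⟨t', hts', ht', hy⟩
    exact ⟨t ∪ t', union_subset hts hts', ht.union ht',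
      adjoin_mono subset_union_left hx, adjoin_mono subset_union_right hy⟩
  have hsingle : ∀ y ∈ adjoin R s, ∃ t ⊆ s, t.Finite ∧ y ∈ adjoin R t := by
    intro y hy
    induction hy using adjoin_induction with
    | mem x hx => exact ⟨{x}, singleton_subset_iff.2 hx, finite_singleton x, subset_adjoin R _ rfl⟩
    | zero => exact ⟨∅, empty_subset s, finite_empty, zero_mem _⟩
    | add x y _ _ hx hy =>
      obtain ⟨t, hts, ht, hxt, hyt⟩ := hpair x y hx hy
      exact ⟨t, hts, ht, add_mem hxt hyt⟩
    | mul x y _ _ hx hy =>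
      obtain ⟨t, hts, ht, hxt, hyt⟩ := hpair x y hx hy
      exact ⟨t, hts, ht, mul_mem hxt hyt⟩
    | smul r x _ hx =>
      obtain ⟨t, hts, ht, hxt⟩ := hx
      exact ⟨t, hts, ht, SMulMemClass.smul_mem r hxt⟩
    | star x _ hx =>
      obtain ⟨t, hts, ht, hxt⟩ := hx
      exact ⟨t, hts, ht, star_mem hxt⟩
  choose! t hts ht hyt using hsingle
  exact ⟨⋃ y ∈ Y, t y, iUnion₂_subset fun y hy => hts y (hYs hy),
    hY.biUnion fun y hy => ht y (hYs hy),
    fun y hy => adjoin_mono (subset_biUnion_of_mem hy) (hyt y (hYs hy))⟩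

def GPath.ofEdge {G : DirGraph V E} (e : E) : GPath G :=
  ⟨[e], List.cons_ne_nil e [], List.isChain_singleton e⟩

section LabeledGraph

variable {G : DirGraph V E} {L : E → 𝒜}

lemma relRng_eq_empty_of_not_isLabelWord {w : List 𝒜} (hw : ¬ IsLabelWord G L w) (A : Set V) :
    relRng G L A w = ∅ :=
  eq_empty_of_forall_notMem fun _ ⟨p, hp, _⟩ => hw ⟨p, hp⟩

@[simp] lemma relRng_empty (w : List 𝒜) : relRng G L ∅ w = ∅ := by
  ext; simp [relRng]

lemma relRng_univ (w : List 𝒜) : relRng G L univ w = rngW G L w := by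
  ext; simp [relRng, rngW]

lemma relRng_subset_rngW (A : Set V) (w : List 𝒜) : relRng G L A w ⊆ rngW G L w :=
  fun _ ⟨p, hp, _, hv⟩ => ⟨p, hp, hv⟩

lemma mem_relRng_singleton {A : Set V} {a : 𝒜} {v : V} :
    v ∈ relRng G L A [a] ↔ ∃ e, L e = a ∧ G.src e ∈ A ∧ G.rng e = v := by
  constructor
  · rintro ⟨⟨edges, ne, chain⟩, hp, hA, rfl⟩
    obtain ⟨e, rfl, rfl⟩ := List.map_eq_singleton_iff.1 hp
    exact ⟨e, rfl, hA, rfl⟩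
  · rintro ⟨e, rfl, he, rfl⟩
    exact ⟨.ofEdge e, rfl, he, rfl⟩

/-- `∅` need not belong to `Bbar G L`, but `p_∅ = 0` is one of the relations. -/
def BbarOrEmpty (G : DirGraph V E) (L : E → 𝒜) (A : Set V) : Prop := Bbar G L A ∨ A = ∅

lemma BbarOrEmpty.inter {A A' : Set V} (hA : BbarOrEmpty G L A) (hA' : BbarOrEmpty G L A') :
    BbarOrEmpty G L (A ∩ A') := by
  rcases hA with hA | rfl
  · rcases hA' with hA' | rfl
    · exact Or.inl (.inter _ _ hA hA')
    · exact Or.inr (inter_empty A)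
  · exact Or.inr (empty_inter A')

lemma bbarOrEmpty_relRng {A : Set V} (hA : BbarOrEmpty G L A) (w : List 𝒜) :
    BbarOrEmpty G L (relRng G L A w) := by
  by_cases hw : IsLabelWord G L w
  · rcases hA with hA | rfl
    · exact Or.inl (.rel A w hA hw)
    · exact Or.inr (relRng_empty w)
  · exact Or.inr (relRng_eq_empty_of_not_isLabelWord hw A)

lemma bbarOrEmpty_rngW (w : List 𝒜) : BbarOrEmpty G L (rngW G L w) := by
  by_cases hw : IsLabelWord G L w
  · exact Or.inl (.base w hw)
  · rw [← relRng_univ]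
    exact Or.inr (relRng_eq_empty_of_not_isLabelWord hw univ)

lemma relRng_inter (sa : StandingAssumptions G L) {A A' : Set V} (hA : BbarOrEmpty G L A)
    (hA' : BbarOrEmpty G L A') (w : List 𝒜) :
    relRng G L (A ∩ A') w = relRng G L A w ∩ relRng G L A' w := by
  by_cases hw : IsLabelWord G L w
  · rcases hA with hA | rfl
    · rcases hA' with hA' | rfl
      · exact (sa.wlr A A' hA hA' w hw).symm
      · simp
    · simp
  · simp [relRng_eq_empty_of_not_isLabelWord hw]

/-- The relative range `r(A, w)`, computed letter by letter, with `r(A, ε) = A`. -/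
def relRngIter (G : DirGraph V E) (L : E → 𝒜) (A : Set V) (w : List 𝒜) : Set V :=
  w.foldl (fun X a => relRng G L X [a]) A

@[simp] lemma relRngIter_nil (A : Set V) : relRngIter G L A [] = A := rfl

@[simp] lemma relRngIter_cons (A : Set V) (a : 𝒜) (w : List 𝒜) :
    relRngIter G L A (a :: w) = relRngIter G L (relRng G L A [a]) w := rfl

@[simp] lemma relRngIter_append (A : Set V) (u w : List 𝒜) :
    relRngIter G L A (u ++ w) = relRngIter G L (relRngIter G L A u) w :=
  List.foldl_append

lemma bbarOrEmpty_relRngIter {A : Set V} (hA : BbarOrEmpty G L A) (w : List 𝒜) :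
    BbarOrEmpty G L (relRngIter G L A w) := by
  induction w generalizing A with
  | nil => exact hA
  | cons a w ih => exact ih (bbarOrEmpty_relRng hA [a])

lemma BbarOrEmpty.inter_relRngIter_univ {C : Set V} (hC : BbarOrEmpty G L C) (w : List 𝒜) :
    BbarOrEmpty G L (C ∩ relRngIter G L univ w) := by
  cases w with
  | nil => simpa using hC
  | cons a w =>
    rw [relRngIter_cons, relRng_univ]
    exact hC.inter (bbarOrEmpty_relRngIter (bbarOrEmpty_rngW [a]) w)

lemma relRngIter_inter (sa : StandingAssumptions G L) {A A' : Set V} (hA : BbarOrEmpty G L A)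
    (hA' : BbarOrEmpty G L A') (w : List 𝒜) :
    relRngIter G L (A ∩ A') w = relRngIter G L A w ∩ relRngIter G L A' w := by
  induction w generalizing A A' with
  | nil => rfl
  | cons a w ih =>
    rw [relRngIter_cons, relRng_inter sa hA hA', ih (bbarOrEmpty_relRng hA [a])
      (bbarOrEmpty_relRng hA' [a]), relRngIter_cons, relRngIter_cons]

lemma exists_isChain_of_mem_relRngIter {A : Set V} {w : List 𝒜} {v : V}
    (hv : v ∈ relRngIter G L A w) :
    ∃ es : List E, es.map L = w ∧ es.IsChain (fun e f => G.rng e = G.src f) ∧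
      ∀ e ∈ es.getLast?, G.rng e = v := by
  induction w using List.reverseRecOn generalizing v with
  | nil => exact ⟨[], rfl, .nil, by simp⟩
  | append_singleton w a ih =>
    rw [relRngIter_append, relRngIter_cons, relRngIter_nil, mem_relRng_singleton] at hv
    obtain ⟨e, rfl, he, rfl⟩ := hv
    obtain ⟨es, rfl, hes, hlast⟩ := ih he
    refine ⟨es ++ [e], by simp, hes.append (.singleton e) ?_, by simp⟩
    simpa using hlast

end LabeledGraph

section ConditionA

variable {G : DirGraph V E} {L : E → 𝒜}

lemma CondA.not_chainExists (hCondA : CondA G L) {𝒮 : Set (Set V)} (h𝒮 : 𝒮.Finite)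
    (hBbar : ∀ A ∈ 𝒮, Bbar G L A) {K : ℕ} (hK : 1 ≤ K) :
    ∃ m0, ∀ n, m0 < n → ∀ As : ℕ → Set V, (∀ j, As j ∈ 𝒮) → ¬ ChainExists G As K (n - 1) := by
  obtain ⟨N, f, hf⟩ := h𝒮.fin_embedding
  obtain ⟨m0, -, hm0⟩ := hCondA N f (fun i => hBbar _ (hf ▸ mem_range_self i)) K hK
  refine ⟨m0, fun n hn As hAs => ?_⟩
  rw [← hf] at hAs
  choose ι hι using hAs
  simpa only [hι] using hm0 n hn ι

lemma CondA.exists_length_le (hCondA : CondA G L) {𝒜₀ : Set 𝒜} (h𝒜₀ : 𝒜₀.Finite) :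
    ∃ m0, ∀ es : List E, es.IsChain (fun e f => G.rng e = G.src f) → (∀ e ∈ es, L e ∈ 𝒜₀) →
      es.length ≤ m0 := by
  obtain ⟨m0, hm0⟩ := hCondA.not_chainExists (𝒮 := (fun a => rngW G L [a]) '' (𝒜₀ ∩ range L))
    ((h𝒜₀.inter_of_left _).image _)
    (by rintro _ ⟨_, ⟨-, e, rfl⟩, rfl⟩; exact .base _ ⟨.ofEdge e, rfl⟩) le_rfl
  refine ⟨m0, fun es hes hes₀ => ?_⟩
  by_contra! hlen
  obtain ⟨e₀, he₀⟩ : ∃ e₀, e₀ ∈ es := List.exists_mem_of_length_pos (by omega)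
  have hmem : ∀ j, es.getD j e₀ ∈ es := fun j => by
    by_cases hj : j < es.length
    · rw [List.getD_eq_getElem _ _ hj]; exact List.getElem_mem hj
    · rwa [List.getD_eq_default _ _ (by omega)]
  have hlink : ∀ j (hj : j + 1 < es.length), G.rng es[j] = G.src es[j + 1] :=
    List.isChain_iff_getElem.1 hes
  -- the edges `es[1], es[2], …` form a chain through `r(L es[0]), r(L es[1]), …`
  refine hm0 es.length hlen (fun j => rngW G L [L (es.getD j e₀)])
    (fun j => ⟨_, ⟨hes₀ _ (hmem j), _, rfl⟩, rfl⟩)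
    ⟨fun j => .ofEdge es[j.1 + 1], fun j => ⟨le_rfl, ?_, ?_⟩, fun j hj => hlink (j + 1) (by omega)⟩
  · dsimp only
    rw [List.getD_eq_getElem _ _ (by omega)]
    exact ⟨.ofEdge es[j.1], rfl, hlink j (by omega)⟩
  · dsimp only
    rw [List.getD_eq_getElem _ _ (by omega)]
    exact ⟨.ofEdge es[j.1 + 1], rfl, rfl⟩

lemma CondA.exists_relRngIter_eq_empty (hCondA : CondA G L) {𝒜₀ : Set 𝒜} (h𝒜₀ : 𝒜₀.Finite) :
    ∃ m0, ∀ (A : Set V) (w : List 𝒜), (∀ a ∈ w, a ∈ 𝒜₀) → m0 < w.length →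
      relRngIter G L A w = ∅ := by
  obtain ⟨m0, hm0⟩ := hCondA.exists_length_le h𝒜₀
  refine ⟨m0, fun A w hw hlen => eq_empty_of_forall_notMem fun v hv => ?_⟩
  obtain ⟨es, rfl, hes, -⟩ := exists_isChain_of_mem_relRngIter hv
  rw [List.length_map] at hlen
  exact hlen.not_ge (hm0 es hes fun e he => hw _ (List.mem_map_of_mem he))

end ConditionA

section RangeFamily

variable {G : DirGraph V E} {L : E → 𝒜} {𝒜₀ : Set 𝒜} {𝒞₀ : Set (Set V)}

def wordsOver (𝒜₀ : Set 𝒜) : Set (List 𝒜) := {w | ∀ a ∈ w, a ∈ 𝒜₀}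

lemma append_mem_wordsOver {u w : List 𝒜} (hu : u ∈ wordsOver 𝒜₀) (hw : w ∈ wordsOver 𝒜₀) :
    u ++ w ∈ wordsOver 𝒜₀ :=
  List.forall_mem_append.2 ⟨hu, hw⟩

lemma finite_wordsOver_length_le (h𝒜₀ : 𝒜₀.Finite) (n : ℕ) :
    {w | w ∈ wordsOver 𝒜₀ ∧ w.length ≤ n}.Finite := by
  have := h𝒜₀.to_subtype
  refine ((List.finite_length_le 𝒜₀ n).image (List.map Subtype.val)).subset ?_
  rintro w ⟨hw, hn⟩
  lift w to List 𝒜₀ using hw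
  exact ⟨w, by simpa using hn, rfl⟩

variable (G L) in
def rangeAtoms (𝒜₀ : Set 𝒜) (𝒞₀ : Set (Set V)) : Set (Set V) :=
  image2 (relRngIter G L) (𝒞₀ ∪ (fun a => rngW G L [a]) '' 𝒜₀) (wordsOver 𝒜₀)

variable (G L) in
def rangeFamily (𝒜₀ : Set 𝒜) (𝒞₀ : Set (Set V)) : Set (Set V) :=
  infClosure (rangeAtoms G L 𝒜₀ 𝒞₀)

lemma rangeAtoms_finite (hCondA : CondA G L) (h𝒜₀ : 𝒜₀.Finite) (h𝒞₀ : 𝒞₀.Finite) :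
    (rangeAtoms G L 𝒜₀ 𝒞₀).Finite := by
  obtain ⟨m0, hm0⟩ := hCondA.exists_relRngIter_eq_empty h𝒜₀
  refine (((h𝒞₀.union (h𝒜₀.image fun a => rngW G L [a])).image2 (relRngIter G L)
    (finite_wordsOver_length_le h𝒜₀ m0)).insert ∅).subset ?_
  rintro _ ⟨X, hX, w, hw, rfl⟩
  by_cases hlen : w.length ≤ m0
  · exact Or.inr ⟨X, hX, w, ⟨hw, hlen⟩, rfl⟩
  · exact Or.inl (hm0 X w hw (by omega))

lemma rangeFamily_finite (hCondA : CondA G L) (h𝒜₀ : 𝒜₀.Finite) (h𝒞₀ : 𝒞₀.Finite) :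
    (rangeFamily G L 𝒜₀ 𝒞₀).Finite :=
  (rangeAtoms_finite hCondA h𝒜₀ h𝒞₀).infClosure

lemma bbarOrEmpty_of_mem_rangeAtoms (h𝒞₀ : ∀ A ∈ 𝒞₀, Bbar G L A) {C : Set V}
    (hC : C ∈ rangeAtoms G L 𝒜₀ 𝒞₀) : BbarOrEmpty G L C := by
  obtain ⟨X, hX | ⟨a, -, rfl⟩, w, -, rfl⟩ := hC
  · exact bbarOrEmpty_relRngIter (Or.inl (h𝒞₀ X hX)) w
  · exact bbarOrEmpty_relRngIter (bbarOrEmpty_rngW [a]) w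

lemma bbarOrEmpty_of_mem_rangeFamily (h𝒞₀ : ∀ A ∈ 𝒞₀, Bbar G L A) {C : Set V}
    (hC : C ∈ rangeFamily G L 𝒜₀ 𝒞₀) : BbarOrEmpty G L C :=
  infClosure_min (t := {C | BbarOrEmpty G L C}) (fun _ => bbarOrEmpty_of_mem_rangeAtoms h𝒞₀)
    (fun _ hC _ hD => BbarOrEmpty.inter hC hD) hC

lemma inter_mem_rangeFamily {C D : Set V} (hC : C ∈ rangeFamily G L 𝒜₀ 𝒞₀)
    (hD : D ∈ rangeFamily G L 𝒜₀ 𝒞₀) : C ∩ D ∈ rangeFamily G L 𝒜₀ 𝒞₀ :=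
  infClosed_infClosure hC hD

lemma mem_rangeFamily_of_mem {A : Set V} (hA : A ∈ 𝒞₀) : A ∈ rangeFamily G L 𝒜₀ 𝒞₀ :=
  subset_infClosure ⟨A, Or.inl hA, [], List.forall_mem_nil _, rfl⟩

lemma rngW_mem_rangeFamily {a : 𝒜} (ha : a ∈ 𝒜₀) : rngW G L [a] ∈ rangeFamily G L 𝒜₀ 𝒞₀ :=
  subset_infClosure ⟨_, Or.inr ⟨a, ha, rfl⟩, [], List.forall_mem_nil _, rfl⟩

lemma relRngIter_mem_rangeFamily (sa : StandingAssumptions G L) (h𝒞₀ : ∀ A ∈ 𝒞₀, Bbar G L A)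
    {C : Set V} (hC : C ∈ rangeFamily G L 𝒜₀ 𝒞₀) {w : List 𝒜} (hw : w ∈ wordsOver 𝒜₀) :
    relRngIter G L C w ∈ rangeFamily G L 𝒜₀ 𝒞₀ := by
  refine (infClosure_min
    (t := {C | BbarOrEmpty G L C ∧ relRngIter G L C w ∈ rangeFamily G L 𝒜₀ 𝒞₀})
    (fun C hC => ⟨bbarOrEmpty_of_mem_rangeAtoms h𝒞₀ hC, ?_⟩) ?_ hC).2
  · obtain ⟨X, hX, u, hu, rfl⟩ := hC
    exact subset_infClosure ⟨X, hX, u ++ w, append_mem_wordsOver hu hw, relRngIter_append X u w⟩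
  · rintro C ⟨hC, hCw⟩ D ⟨hD, hDw⟩
    refine ⟨hC.inter hD, ?_⟩
    change relRngIter G L (C ∩ D) w ∈ _
    rw [relRngIter_inter sa hC hD]
    exact inter_mem_rangeFamily hCw hDw

lemma inter_relRngIter_univ_mem_rangeFamily {C : Set V} (hC : C ∈ rangeFamily G L 𝒜₀ 𝒞₀)
    {w : List 𝒜} (hw : w ∈ wordsOver 𝒜₀) :
    C ∩ relRngIter G L univ w ∈ rangeFamily G L 𝒜₀ 𝒞₀ := by
  cases w with
  | nil => simpa using hC
  | cons a w =>
    rw [relRngIter_cons, relRng_univ]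
    exact inter_mem_rangeFamily hC (subset_infClosure
      ⟨_, Or.inr ⟨a, hw a List.mem_cons_self, rfl⟩, w, fun b hb => hw b (.tail a hb), rfl⟩)

end RangeFamily

namespace LRep

section Algebra

variable {G : DirGraph V E} {L : E → 𝒜} {B : Type*} [NonUnitalRing B] [StarRing B]
  (rep : LRep G L B)

/-- `s_α x`; the empty word acts as the identity, `B` having no unit. -/
def lmul (α : List 𝒜) (x : B) : B := α.foldr (fun a y => rep.s a * y) x

/-- `x s_β^*`. -/
def rmul (β : List 𝒜) (x : B) : B := star (rep.lmul β (star x))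

/-- `s_α p_C s_β^*`. -/
def monomial (α : List 𝒜) (C : Set V) (β : List 𝒜) : B := rep.lmul α (rep.rmul β (rep.p C))

variable {rep}

@[simp] lemma lmul_nil (x : B) : rep.lmul [] x = x := rfl

@[simp] lemma lmul_cons (a : 𝒜) (α : List 𝒜) (x : B) :
    rep.lmul (a :: α) x = rep.s a * rep.lmul α x := rfl

lemma lmul_append (α μ : List 𝒜) (x : B) : rep.lmul (α ++ μ) x = rep.lmul α (rep.lmul μ x) :=
  List.foldr_append

@[simp] lemma lmul_zero (α : List 𝒜) : rep.lmul α (0 : B) = 0 := by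
  induction α with
  | nil => rfl
  | cons a α ih => simp [ih]

lemma lmul_mul (α : List 𝒜) (x y : B) : rep.lmul α x * y = rep.lmul α (x * y) := by
  induction α with
  | nil => rfl
  | cons a α ih => simp [mul_assoc, ih]

@[simp] lemma rmul_zero (β : List 𝒜) : rep.rmul β (0 : B) = 0 := by
  simp [rmul]

lemma mul_rmul (β : List 𝒜) (x y : B) : x * rep.rmul β y = rep.rmul β (x * y) := by
  rw [rmul, rmul, star_mul, ← lmul_mul, star_mul, star_star]

lemma lmul_rmul (α β : List 𝒜) (x : B) :
    rep.lmul α (rep.rmul β x) = rep.rmul β (rep.lmul α x) := by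
  induction α with
  | nil => rfl
  | cons a α ih => rw [lmul_cons, ih, mul_rmul, lmul_cons]

lemma star_lmul (α : List 𝒜) (x : B) : star (rep.lmul α x) = rep.rmul α (star x) := by
  simp [rmul]

lemma star_rmul (α : List 𝒜) (x : B) : star (rep.rmul α x) = rep.lmul α (star x) := by
  simp [rmul]

lemma star_p {A : Set V} (hA : BbarOrEmpty G L A) : star (rep.p A) = rep.p A := by
  rcases hA with hA | rfl
  · exact rep.p_sa A hA
  · rw [rep.p_empty, star_zero]

lemma p_mul_p {A A' : Set V} (hA : BbarOrEmpty G L A) (hA' : BbarOrEmpty G L A') :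
    rep.p A * rep.p A' = rep.p (A ∩ A') := by
  rcases hA with hA | rfl
  · rcases hA' with hA' | rfl
    · exact rep.p_mul A A' hA hA'
    · simp [rep.p_empty]
  · simp [rep.p_empty]

lemma p_mul_s {A : Set V} (hA : BbarOrEmpty G L A) (a : 𝒜) :
    rep.p A * rep.s a = rep.s a * rep.p (relRng G L A [a]) := by
  rcases hA with hA | rfl
  · exact rep.p_s A a hA
  · simp [rep.p_empty]

lemma s_mul_p_rngW (a : 𝒜) : rep.s a * rep.p (rngW G L [a]) = rep.s a := by
  rw [← rep.s_s, ← mul_assoc, rep.s_pi]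

lemma star_s_mul_p_mul_s {A : Set V} (hA : BbarOrEmpty G L A) (a : 𝒜) :
    star (rep.s a) * rep.p A * rep.s a = rep.p (relRng G L A [a]) := by
  rw [mul_assoc, p_mul_s hA, ← mul_assoc, rep.s_s,
    p_mul_p (bbarOrEmpty_rngW [a]) (bbarOrEmpty_relRng hA [a]),
    inter_eq_right.2 (relRng_subset_rngW A [a])]

lemma p_mul_lmul {A : Set V} (hA : BbarOrEmpty G L A) (w : List 𝒜) (y : B) :
    rep.p A * rep.lmul w y = rep.lmul w (rep.p (relRngIter G L A w) * y) := by
  induction w generalizing A with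
  | nil => rfl
  | cons a w ih =>
    rw [lmul_cons, ← mul_assoc, p_mul_s hA, mul_assoc, ih (bbarOrEmpty_relRng hA [a]),
      relRngIter_cons, lmul_cons]

lemma star_lmul_mul_p_mul_lmul {A : Set V} (hA : BbarOrEmpty G L A) (w : List 𝒜) (x y : B) :
    star (rep.lmul w x) * rep.p A * rep.lmul w y = star x * rep.p (relRngIter G L A w) * y := by
  induction w generalizing A with
  | nil => rfl
  | cons a w ih =>
    calc star (rep.lmul (a :: w) x) * rep.p A * rep.lmul (a :: w) y
        = star (rep.lmul w x) * (star (rep.s a) * rep.p A * rep.s a) * rep.lmul w y := by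
          simp only [lmul_cons, star_mul, mul_assoc]
      _ = star x * rep.p (relRngIter G L A (a :: w)) * y := by
          rw [star_s_mul_p_mul_s hA, ih (bbarOrEmpty_relRng hA [a]), relRngIter_cons]

lemma star_lmul_mul_lmul_cons (a : 𝒜) (w : List 𝒜) (x y : B) :
    star (rep.lmul (a :: w) x) * rep.lmul (a :: w) y =
      star x * rep.p (relRngIter G L univ (a :: w)) * y := by
  calc star (rep.lmul (a :: w) x) * rep.lmul (a :: w) y
      = star (rep.lmul w x) * (star (rep.s a) * rep.s a) * rep.lmul w y := by
        simp only [lmul_cons, star_mul, mul_assoc]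
    _ = _ := by
        rw [rep.s_s, star_lmul_mul_p_mul_lmul (bbarOrEmpty_rngW [a]), relRngIter_cons,
          relRng_univ]

lemma star_lmul_p_mul_lmul {C : Set V} (hC : BbarOrEmpty G L C) (w : List 𝒜) (y : B) :
    star (rep.lmul w (rep.p C)) * rep.lmul w y = rep.p (C ∩ relRngIter G L univ w) * y := by
  cases w with
  | nil => simp [star_p hC]
  | cons a w =>
    rw [star_lmul_mul_lmul_cons, star_p hC, relRngIter_cons, relRng_univ,
      p_mul_p hC (bbarOrEmpty_relRngIter (bbarOrEmpty_rngW [a]) w)]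

lemma star_lmul_mul_lmul_eq_zero {β μ : List 𝒜} (h₁ : ¬ β <+: μ) (h₂ : ¬ μ <+: β) (x y : B) :
    star (rep.lmul β x) * rep.lmul μ y = 0 := by
  induction β generalizing μ y with
  | nil => exact absurd (List.nil_prefix) h₁
  | cons a β ih =>
    cases μ with
    | nil => exact absurd (List.nil_prefix) h₂
    | cons b μ =>
      have hsplit : star (rep.lmul (a :: β) x) * rep.lmul (b :: μ) y =
          star (rep.lmul β x) * (star (rep.s a) * rep.s b * rep.lmul μ y) := by
        simp only [lmul_cons, star_mul, mul_assoc]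
      rw [hsplit]
      by_cases hab : a = b
      · subst hab
        rw [rep.s_s, p_mul_lmul (bbarOrEmpty_rngW [a])]
        exact ih (fun h => h₁ (List.cons_prefix_cons.2 ⟨rfl, h⟩))
          (fun h => h₂ (List.cons_prefix_cons.2 ⟨rfl, h⟩)) _
      · rw [rep.s_orth a b hab, zero_mul, mul_zero]

lemma rmul_p {C : Set V} (hC : BbarOrEmpty G L C) (β : List 𝒜) :
    rep.rmul β (rep.p C) = star (rep.lmul β (rep.p C)) := by
  rw [rmul, star_p hC]

lemma star_monomial {C : Set V} (hC : BbarOrEmpty G L C) (α β : List 𝒜) :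
    star (rep.monomial α C β) = rep.monomial β C α := by
  rw [monomial, star_lmul, star_rmul, star_p hC, ← lmul_rmul, monomial]

lemma monomial_mul_monomial {C : Set V} (hC : BbarOrEmpty G L C) (α β μ ν : List 𝒜) (D : Set V) :
    rep.monomial α C β * rep.monomial μ D ν =
      rep.lmul α (rep.rmul ν (star (rep.lmul β (rep.p C)) * rep.lmul μ (rep.p D))) := by
  rw [monomial, monomial, lmul_mul, lmul_rmul μ, mul_rmul, rmul_p hC]

lemma monomial_mul_monomial_append {C D : Set V} (hC : BbarOrEmpty G L C)
    (hD : BbarOrEmpty G L D) (α β μ ν : List 𝒜) :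
    rep.monomial α C β * rep.monomial (β ++ μ) D ν =
      rep.monomial (α ++ μ) (relRngIter G L (C ∩ relRngIter G L univ β) μ ∩ D) ν := by
  rw [monomial_mul_monomial hC, lmul_append, star_lmul_p_mul_lmul hC,
    p_mul_lmul (hC.inter_relRngIter_univ β),
    p_mul_p (bbarOrEmpty_relRngIter (hC.inter_relRngIter_univ β) μ) hD, ← lmul_rmul,
    ← lmul_append, monomial]

lemma monomial_append_mul_monomial {C D : Set V} (hC : BbarOrEmpty G L C)
    (hD : BbarOrEmpty G L D) (α β μ ν : List 𝒜) :
    rep.monomial α C (μ ++ β) * rep.monomial μ D ν =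
      rep.monomial α (relRngIter G L (D ∩ relRngIter G L univ μ) β ∩ C) (ν ++ β) := by
  rw [← star_star (_ * _), star_mul, star_monomial hC, star_monomial hD,
    monomial_mul_monomial_append hD hC,
    star_monomial ((bbarOrEmpty_relRngIter (hD.inter_relRngIter_univ μ) β).inter hC)]

lemma monomial_mul_monomial_eq_zero {C : Set V} (hC : BbarOrEmpty G L C) {β μ : List 𝒜}
    (h₁ : ¬ β <+: μ) (h₂ : ¬ μ <+: β) (α ν : List 𝒜) (D : Set V) :
    rep.monomial α C β * rep.monomial μ D ν = 0 := by
  rw [monomial_mul_monomial hC, star_lmul_mul_lmul_eq_zero h₁ h₂, rmul_zero, lmul_zero]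

end Algebra

section CStarAlgebra

variable {G : DirGraph V E} {L : E → 𝒜} {B : Type*} [NonUnitalCStarAlgebra B]
  {rep : LRep G L B} {𝒜₀ : Set 𝒜} {𝒞₀ : Set (Set V)}

lemma lmul_eq_zero {w : List 𝒜} (hw : w ≠ []) (hr : relRngIter G L univ w = ∅) (x : B) :
    rep.lmul w x = 0 := by
  obtain ⟨a, w, rfl⟩ := List.exists_cons_of_ne_nil hw
  rw [← CStarRing.star_mul_self_eq_zero_iff, star_lmul_mul_lmul_cons, hr, rep.p_empty,
    mul_zero, zero_mul]

variable (rep 𝒜₀ 𝒞₀) in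
def monomials : Set B :=
  {x | ∃ α ∈ wordsOver 𝒜₀, ∃ C ∈ rangeFamily G L 𝒜₀ 𝒞₀, ∃ β ∈ wordsOver 𝒜₀,
    rep.monomial α C β = x}

lemma monomials_finite (hCondA : CondA G L) (h𝒜₀ : 𝒜₀.Finite) (h𝒞₀ : 𝒞₀.Finite) :
    (rep.monomials 𝒜₀ 𝒞₀).Finite := by
  obtain ⟨m0, hm0⟩ := hCondA.exists_relRngIter_eq_empty h𝒜₀
  have hW := finite_wordsOver_length_le h𝒜₀ m0
  refine ((((hW.prod (rangeFamily_finite hCondA h𝒜₀ h𝒞₀)).prod hW).image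
    fun q => rep.monomial q.1.1 q.1.2 q.2).insert 0).subset ?_
  rintro _ ⟨α, hα, C, hC, β, hβ, rfl⟩
  have hlong : ∀ w ∈ wordsOver 𝒜₀, ¬ w.length ≤ m0 → ∀ x : B, rep.lmul w x = 0 :=
    fun w hw hlen => lmul_eq_zero (by rintro rfl; simp at hlen)
      (hm0 univ w hw (by omega))
  by_cases hαm : α.length ≤ m0
  · by_cases hβm : β.length ≤ m0
    · exact Or.inr ⟨((α, C), β), ⟨⟨⟨hα, hαm⟩, hC⟩, ⟨hβ, hβm⟩⟩, rfl⟩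
    · exact Or.inl (by simp [monomial, rmul, hlong β hβ hβm])
  · exact Or.inl (hlong α hα hαm _)

lemma mul_mem_monomials (sa : StandingAssumptions G L) (h𝒞₀ : ∀ A ∈ 𝒞₀, Bbar G L A) {x y : B}
    (hx : x ∈ rep.monomials 𝒜₀ 𝒞₀) (hy : y ∈ rep.monomials 𝒜₀ 𝒞₀) :
    x * y ∈ insert 0 (rep.monomials 𝒜₀ 𝒞₀) := by
  obtain ⟨α, hα, C, hC, β, hβ, rfl⟩ := hx
  obtain ⟨μ, hμ, D, hD, ν, hν, rfl⟩ := hy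
  have hC' := bbarOrEmpty_of_mem_rangeFamily h𝒞₀ hC
  have hD' := bbarOrEmpty_of_mem_rangeFamily h𝒞₀ hD
  by_cases h₁ : β <+: μ
  · obtain ⟨μ, rfl⟩ := h₁
    have hμ' := (List.forall_mem_append.1 hμ).2
    rw [monomial_mul_monomial_append hC' hD']
    exact Or.inr ⟨_, append_mem_wordsOver hα hμ', _, inter_mem_rangeFamily
      (relRngIter_mem_rangeFamily sa h𝒞₀ (inter_relRngIter_univ_mem_rangeFamily hC hβ) hμ') hD,
      ν, hν, rfl⟩
  by_cases h₂ : μ <+: β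
  · obtain ⟨β, rfl⟩ := h₂
    have hβ' := (List.forall_mem_append.1 hβ).2
    rw [monomial_append_mul_monomial hC' hD']
    exact Or.inr ⟨α, hα, _, inter_mem_rangeFamily
      (relRngIter_mem_rangeFamily sa h𝒞₀ (inter_relRngIter_univ_mem_rangeFamily hD hμ) hβ') hC,
      _, append_mem_wordsOver hν hβ', rfl⟩
  exact Or.inl (monomial_mul_monomial_eq_zero hC' h₁ h₂ α ν D)

lemma star_mem_monomials (h𝒞₀ : ∀ A ∈ 𝒞₀, Bbar G L A) {x : B}
    (hx : x ∈ rep.monomials 𝒜₀ 𝒞₀) : star x ∈ rep.monomials 𝒜₀ 𝒞₀ := by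
  obtain ⟨α, hα, C, hC, β, hβ, rfl⟩ := hx
  exact ⟨β, hβ, C, hC, α, hα, (star_monomial (bbarOrEmpty_of_mem_rangeFamily h𝒞₀ hC) α β).symm⟩

lemma s_mem_monomials {a : 𝒜} (ha : a ∈ 𝒜₀) : rep.s a ∈ rep.monomials 𝒜₀ 𝒞₀ :=
  ⟨[a], by simpa [wordsOver] using ha, _, rngW_mem_rangeFamily ha, [], List.forall_mem_nil _,
    by simp [monomial, rmul, s_mul_p_rngW]⟩

lemma p_mem_monomials {A : Set V} (hA : A ∈ 𝒞₀) : rep.p A ∈ rep.monomials 𝒜₀ 𝒞₀ :=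
  ⟨[], List.forall_mem_nil _, A, mem_rangeFamily_of_mem hA, [], List.forall_mem_nil _,
    by simp [monomial, rmul]⟩

lemma finiteDimensional_adjoin (sa : StandingAssumptions G L) (hCondA : CondA G L)
    (h𝒜₀ : 𝒜₀.Finite) (h𝒞₀ : 𝒞₀.Finite) (h𝒞₀Bbar : ∀ A ∈ 𝒞₀, Bbar G L A) {t : Set B}
    (ht : t ⊆ rep.s '' 𝒜₀ ∪ rep.p '' 𝒞₀) :
    FiniteDimensional ℂ (NonUnitalStarAlgebra.adjoin ℂ t) := by
  let Z : Subsemigroup B :=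
    { carrier := insert 0 (rep.monomials 𝒜₀ 𝒞₀)
      mul_mem' := by
        rintro x y (rfl | hx) (rfl | hy)
        · exact Or.inl (zero_mul _)
        · exact Or.inl (zero_mul _)
        · exact Or.inl (mul_zero _)
        · exact mul_mem_monomials sa h𝒞₀Bbar hx hy }
  have htZ : t ⊆ rep.monomials 𝒜₀ 𝒞₀ := fun x hx => by
    rcases ht hx with ⟨a, ha, rfl⟩ | ⟨A, hA, rfl⟩
    exacts [s_mem_monomials ha, p_mem_monomials hA]
  have hspan : (NonUnitalStarAlgebra.adjoin ℂ t).toSubmodule ≤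
      Submodule.span ℂ (insert 0 (rep.monomials 𝒜₀ 𝒞₀)) := by
    rw [NonUnitalStarAlgebra.adjoin_eq_span]
    refine Submodule.span_mono ((Subsemigroup.closure_le (S := Z)).2 ?_)
    rintro x (hx | hx)
    · exact Or.inr (htZ hx)
    · exact Or.inr (star_star x ▸ star_mem_monomials h𝒞₀Bbar (htZ hx))
  have := FiniteDimensional.span_of_finite ℂ
    ((monomials_finite hCondA h𝒜₀ h𝒞₀ (rep := rep)).insert 0)
  exact Submodule.finiteDimensional_of_le hspan

lemma finiteDimensional_adjoin_of_finite (sa : StandingAssumptions G L) (hCondA : CondA G L)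
    {t : Set B} (ht : t.Finite)
    (hts : t ⊆ range rep.s ∪ rep.p '' {A | Bbar G L A}) :
    FiniteDimensional ℂ (NonUnitalStarAlgebra.adjoin ℂ t) := by
  obtain ⟨𝒜₀, -, h𝒜₀, hs⟩ := exists_subset_image_finite_and.1
    ⟨t ∩ range rep.s, by rw [← image_univ]; exact inter_subset_right, ht.inter_of_left _,
      subset_rfl⟩
  obtain ⟨𝒞₀, h𝒞₀Bbar, h𝒞₀, hp⟩ := exists_subset_image_finite_and.1
    ⟨t ∩ rep.p '' {A | Bbar G L A}, inter_subset_right, ht.inter_of_left _, subset_rfl⟩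
  refine rep.finiteDimensional_adjoin sa hCondA h𝒜₀ h𝒞₀ h𝒞₀Bbar fun x hx => ?_
  rcases hts hx with hx' | hx'
  exacts [Or.inl (hs ⟨hx, hx'⟩), Or.inr (hp ⟨hx, hx'⟩)]

end CStarAlgebra

end LRep

theorem condA_implies_AF_general {V E 𝒜 B : Type*}
    [NonUnitalCStarAlgebra B]
    (G : DirGraph V E) (L : E → 𝒜)
    (sa : StandingAssumptions G L)
    (hCondA : CondA G L)
    (rep : LRep G L B)
    (S : Set B)
    (hS : S = closure (NonUnitalStarAlgebra.adjoin ℂ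
      ({x : B | ∃ a : 𝒜, x = rep.s a} ∪
        {x : B | ∃ A : Set V, Bbar G L A ∧ x = rep.p A}) : Set B)) :
    ∀ F : Finset B, (∀ x ∈ F, x ∈ S) → ∀ ε : ℝ, 0 < ε →
      ∃ D : NonUnitalStarSubalgebra ℂ B, (D : Set B) ⊆ S ∧ FiniteDimensional ℂ D ∧
        ∀ x ∈ F, ∃ y ∈ (D : Set B), ‖x - y‖ < ε := by
  intro F hF ε hε
  set gens := {x : B | ∃ a : 𝒜, x = rep.s a} ∪ {x : B | ∃ A : Set V, Bbar G L A ∧ x = rep.p A}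
  have happrox : ∀ x ∈ F, ∃ y ∈ NonUnitalStarAlgebra.adjoin ℂ gens, ‖x - y‖ < ε := by
    intro x hx
    obtain ⟨y, hy, hxy⟩ := Metric.mem_closure_iff.1 (hS ▸ hF x hx) ε hε
    exact ⟨y, hy, by rwa [← dist_eq_norm]⟩
  choose! y hy hxy using happrox
  obtain ⟨t, hts, ht, hyt⟩ := NonUnitalStarAlgebra.exists_finite_subset_of_subset_adjoin
    (F.finite_toSet.image y) (image_subset_iff.2 hy)
  refine ⟨NonUnitalStarAlgebra.adjoin ℂ t, ?_,
    LRep.finiteDimensional_adjoin_of_finite (rep := rep) sa hCondA ht ?_,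
    fun x hx => ⟨y x, hyt (mem_image_of_mem y hx), hxy x hx⟩⟩
  · rw [hS]
    exact (SetLike.coe_subset_coe.2 (NonUnitalStarAlgebra.adjoin_mono hts)).trans subset_closure
  · refine hts.trans ?_
    rintro _ (⟨a, rfl⟩ | ⟨A, hA, rfl⟩)
    exacts [Or.inl ⟨a, rfl⟩, Or.inr ⟨A, hA, rfl⟩]

/-- Theorem 4.4. If `(E, L, 𝔅̄)` satisfies condition (a),
then for every representation `{s_a, p_A}` in a C*-algebra, the C*-subalgebra
generated by `{s_a : a ∈ 𝒜} ∪ {p_A : A ∈ 𝔅̄}` is an AF algebra: every finite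
subset of it can be approximated within any `ε > 0` from a finite-dimensional
C*-subalgebra of it. -/
theorem condA_implies_AF {V E 𝒜 B : Type*}
    [Countable V] [Countable E] [Countable 𝒜]
    [NonUnitalCStarAlgebra B]
    (G : DirGraph V E) (L : E → 𝒜) (hL : Function.Surjective L)
    (sa : StandingAssumptions G L)
    (hCondA : CondA G L)
    (rep : LRep G L B)
    (S : Set B)
    (hS : S = closure (NonUnitalStarAlgebra.adjoin ℂ
      ({x : B | ∃ a : 𝒜, x = rep.s a} ∪
        {x : B | ∃ A : Set V, Bbar G L A ∧ x = rep.p A}) : Set B)) :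
    ∀ F : Finset B, (∀ x ∈ F, x ∈ S) → ∀ ε : ℝ, 0 < ε →
      ∃ D : NonUnitalStarSubalgebra ℂ B, (D : Set B) ⊆ S ∧ FiniteDimensional ℂ D ∧
        ∀ x ∈ F, ∃ y ∈ (D : Set B), ‖x - y‖ < ε :=
  condA_implies_AF_general G L sa hCondA rep S hS

end
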